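/- The ring homomorphism φ₂: ℤ[u_1,u_2,v_1,v_2]^{S_2×S_2} → (ℤ[x_1,x_2,c_1,c_2]/(c_1²,c_2²))^{S_2} defined by u_i ↦ x_i, v_i ↦ x_i + c_i is NOT surjective over ℤ: the element c_1 c_2 is not in the image, but 2 c_1 c_2 = φ₂((v_1+v_2-u_1-u_2)²) is in the image. -/

import Mathlib

open MvPolynomial

noncomputable section

abbrev PolyUV := MvPolynomial (Fin 2 ⊕ Fin 2) ℤ

def cSqIdeal : Ideal PolyUV :=
  Ideal.span (Set.range fun i : Fin 2 => (X (Sum.inr i) : PolyUV) ^ 2)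

abbrev TruncPoly := PolyUV ⧸ cSqIdeal

def tmk : PolyUV →+* TruncPoly := Ideal.Quotient.mk cSqIdeal

/-- `φ₂ : ℤ[u_1,u_2,v_1,v_2] → ℤ[x_1,x_2,c_1,c_2]/(c²)`, `u_i ↦ x_i`, `v_i ↦ x_i + c_i`. -/
def phi2 : PolyUV →ₐ[ℤ] TruncPoly :=
  aeval (Sum.elim (fun i => tmk (X (Sum.inl i)))
    (fun i => tmk (X (Sum.inl i) + X (Sum.inr i))))

/-!
A ring map `ψ` out of `ℤ[x, c]/(c₁², c₂²)` is given by images `aᵢ` of `xᵢ` and square-zero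
images `cᵢ` of `cᵢ`, and `ψ ∘ φ₂` sends `uᵢ ↦ aᵢ`, `vᵢ ↦ aᵢ + cᵢ`. Precomposing with a
permutation `σ` of the `u`'s gives `ψ' ∘ φ₂`, where `ψ'` sends `xᵢ ↦ a_{σ i}` and
`cᵢ ↦ aᵢ + cᵢ - a_{σ i}`, provided these square to zero. So `ψ` and `ψ'` agree on `φ₂` of every
`u`-symmetric polynomial. Over `𝔽₂[ε][δ]` (`ε² = δ² = 0`) take `a = (δ, 0)`, `c = (ε, 0)`
and `σ` the swap: then `(δ + ε)² = 2δε = 0`, but `ψ(c₁c₂) = 0` while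
`ψ'(c₁c₂) = -(δ + ε)δ = εδ ≠ 0`.
The obstruction lives in characteristic 2, as it must: `2c₁c₂` is in the image.
-/

open Sum

section TruncLift

variable {R : Type*} [CommRing R]

def truncLift (a c : Fin 2 → R) (hc : ∀ i, c i ^ 2 = 0) : TruncPoly →ₐ[ℤ] R :=
  Ideal.Quotient.liftₐ cSqIdeal (aeval (Sum.elim a c)) fun _ hp => by
    refine (Ideal.span_le (I := RingHom.ker (aeval (R := ℤ) (Sum.elim a c)))).2 ?_ hp
    rintro _ ⟨i, rfl⟩
    simp [hc]

@[simp]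
theorem truncLift_tmk (a c : Fin 2 → R) (hc : ∀ i, c i ^ 2 = 0) (p : PolyUV) :
    truncLift a c hc (tmk p) = aeval (Sum.elim a c) p :=
  rfl

theorem truncLift_phi2 (a c : Fin 2 → R) (hc : ∀ i, c i ^ 2 = 0) (P : PolyUV) :
    truncLift a c hc (phi2 P) = aeval (Sum.elim a (a + c)) P := by
  rw [← AlgHom.comp_apply]
  congr 1
  refine algHom_ext fun v => ?_
  cases v <;> simp [phi2]

theorem truncLift_phi2_of_rename_eq {σ : Equiv.Perm (Fin 2)} {P : PolyUV}
    (hP : rename (Equiv.sumCongr σ 1) P = P) (a c : Fin 2 → R) (hc : ∀ i, c i ^ 2 = 0)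
    (hc' : ∀ i, (a i + c i - a (σ i)) ^ 2 = 0) :
    truncLift (a ∘ σ) (fun i => a i + c i - a (σ i)) hc' (phi2 P) =
      truncLift a c hc (phi2 P) := by
  rw [truncLift_phi2, truncLift_phi2]
  conv_rhs => rw [← hP, aeval_rename]
  congr 2
  funext v
  cases v <;> simp

end TruncLift

section NotInImage

open DualNumber

theorem phi2_ne_of_rename_swap_eq {P : PolyUV}
    (hP : rename (Equiv.sumCongr (Equiv.swap 0 1) 1) P = P) :
    phi2 P ≠ tmk (X (inr 0) * X (inr 1)) := by
  intro h
  -- The header's `δ` is the outer `ε` here, and its `ε` is `TrivSqZeroExt.inl ε`.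
  have hε : (TrivSqZeroExt.inl ε : DualNumber (DualNumber (ZMod 2))) ^ 2 = 0 := by
    ext <;> simp [sq]
  have hδε : (ε + TrivSqZeroExt.inl ε : DualNumber (DualNumber (ZMod 2))) ^ 2 = 0 := by
    ext <;> simp [sq, CharTwo.add_self_eq_zero]
  have key := truncLift_phi2_of_rename_eq hP
    (![ε, 0] : Fin 2 → DualNumber (DualNumber (ZMod 2))) ![TrivSqZeroExt.inl ε, 0]
    (by simp [Fin.forall_fin_two, hε]) (by simp [Fin.forall_fin_two, hδε])
  rw [h] at key
  simpa using congrArg (fun x => x.snd.snd) key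

end NotInImage

theorem tmk_X_inr_sq (i : Fin 2) : tmk (X (inr i)) ^ 2 = 0 := by
  rw [← map_pow, tmk, Ideal.Quotient.eq_zero_iff_mem]
  exact Ideal.subset_span ⟨i, rfl⟩

theorem apply_perm_zero_add_apply_perm_one {M : Type*} [AddCommMonoid M]
    (σ : Equiv.Perm (Fin 2)) (f : Fin 2 → M) : f (σ 0) + f (σ 1) = f 0 + f 1 := by
  simpa [Fin.sum_univ_two] using Equiv.sum_comp σ f

/-- `φ₂` is not surjective on `(S_2 × S_2)`-invariants: `c_1c_2` is not in the image
of the invariants, yet `2c_1c_2 = φ₂((v_1+v_2-u_1-u_2)²)` is, the polynomial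
`(v_1+v_2-u_1-u_2)²` being `(S_2 × S_2)`-invariant. -/
theorem phi2_not_surjective :
    (∀ P : PolyUV, (∀ σ τ : Equiv.Perm (Fin 2), rename (Equiv.sumCongr σ τ) P = P) →
      phi2 P ≠ tmk (X (Sum.inr 0) * X (Sum.inr 1))) ∧
    (∀ σ τ : Equiv.Perm (Fin 2),
      rename (Equiv.sumCongr σ τ)
        (((X (Sum.inr 0) + X (Sum.inr 1) - X (Sum.inl 0) - X (Sum.inl 1)) ^ 2 : PolyUV))
        = ((X (Sum.inr 0) + X (Sum.inr 1) - X (Sum.inl 0) - X (Sum.inl 1)) ^ 2 : PolyUV)) ∧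
    phi2 ((X (Sum.inr 0) + X (Sum.inr 1) - X (Sum.inl 0) - X (Sum.inl 1)) ^ 2)
      = tmk (2 * (X (Sum.inr 0) * X (Sum.inr 1))) := by
  refine ⟨fun P hP => phi2_ne_of_rename_swap_eq (hP _ 1), fun σ τ => ?_, ?_⟩
  · have hu := apply_perm_zero_add_apply_perm_one σ fun i => (X (inl i) : PolyUV)
    have hv := apply_perm_zero_add_apply_perm_one τ fun i => (X (inr i) : PolyUV)
    simp only [map_pow, map_sub, map_add, rename_X, Equiv.sumCongr_apply, Sum.map_inl,
      Sum.map_inr]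
    rw [sub_sub, sub_sub, hu, hv]
  · simp only [phi2, map_add, map_pow, map_sub, aeval_X, elim_inr, elim_inl, map_mul, map_ofNat]
    linear_combination tmk_X_inr_sq 0 + tmk_X_inr_sq 1

end
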